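/- arXiv:0903.4812 — 5 statements merged into one kernel-verified Lean document; each statement's English description precedes it below -/
import Mathlib

section
/- Survey transitivity: Let P be a finitely-supported distribution on a finite-dimensional real vector space V. If C is a survey of P (on some skeleton) and D is a survey of C (on some skeleton), then D is a survey of P, i.e., there exists a skeleton (T, γ₁,…,γ_m) with base set equal to that of D such that P(D = Tᵢ) = E[γᵢ(P)] for all i. -/
/-!
Take `γᵢ(η) = ∑ⱼ αⱼ(η) βᵢ(Sⱼ)`: substituting the `T`-coordinates of every vertex `Sⱼ` into the
`S`-coordinates of `η` gives `T`-coordinates of `η`, and the survey identity for `D` is then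
just an exchange of two finite sums.
-/

open Finset

section Barycentric

variable {V ι κ : Type*} [AddCommGroup V] [Module ℝ V] [Fintype ι] [Fintype κ]

structure IsBarycentricCoords (S : ι → V) (w : ι → ℝ) (η : V) : Prop where
  nonneg : ∀ i, 0 ≤ w i
  sum_eq_one : ∑ i, w i = 1
  sum_smul_eq : ∑ i, w i • S i = η

namespace IsBarycentricCoords

variable {S : ι → V} {w : ι → ℝ} {η : V}

theorem mem_Icc (h : IsBarycentricCoords S w η) (i : ι) : w i ∈ Set.Icc (0 : ℝ) 1 :=
  ⟨h.nonneg i, h.sum_eq_one ▸ single_le_sum (fun j _ => h.nonneg j) (mem_univ i)⟩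

theorem comp {T : κ → V} {v : ι → κ → ℝ} (h : IsBarycentricCoords S w η)
    (hv : ∀ j, IsBarycentricCoords T (v j) (S j)) :
    IsBarycentricCoords T (fun i => ∑ j, w j * v j i) η where
  nonneg i := sum_nonneg fun j _ => mul_nonneg (h.nonneg j) ((hv j).nonneg i)
  sum_eq_one := by
    calc ∑ i, ∑ j, w j * v j i = ∑ j, w j * ∑ i, v j i := by
          rw [sum_comm]; simp only [mul_sum]
      _ = 1 := by simp only [(hv _).sum_eq_one, mul_one, h.sum_eq_one]
  sum_smul_eq := by
    calc ∑ i, (∑ j, w j * v j i) • T i = ∑ j, w j • ∑ i, v j i • T i := by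
          simp only [sum_smul, smul_sum, mul_smul]; exact sum_comm
      _ = η := by simp only [(hv _).sum_smul_eq, h.sum_smul_eq]

end IsBarycentricCoords

theorem sum_sum_mul_eq_sum_mul_sum {X : Type*} (s : Finset X) (p : X → ℝ) (a : ι → X → ℝ)
    (b : ι → ℝ) :
    ∑ j, (∑ x ∈ s, p x * a j x) * b j = ∑ x ∈ s, p x * ∑ j, a j x * b j := by
  simp only [sum_mul, mul_sum, mul_assoc]
  exact sum_comm

end Barycentric

theorem survey_transitive_general {V : Type*} [AddCommGroup V] [Module ℝ V]
    {n m : ℕ}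
    (S : Fin n → V) (α : Fin n → V → ℝ)
    (hα01 : ∀ η ∈ convexHull ℝ (Set.range S), ∀ i, α i η ∈ Set.Icc (0:ℝ) 1)
    (hαsum : ∀ η ∈ convexHull ℝ (Set.range S), ∑ i, α i η = 1)
    (hαdec : ∀ η ∈ convexHull ℝ (Set.range S), ∑ i, α i η • S i = η)
    (T : Fin m → V) (β : Fin m → V → ℝ)
    (hST : ∀ j, S j ∈ convexHull ℝ (Set.range T))
    (hβ01 : ∀ η ∈ convexHull ℝ (Set.range T), ∀ i, β i η ∈ Set.Icc (0:ℝ) 1)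
    (hβsum : ∀ η ∈ convexHull ℝ (Set.range T), ∑ i, β i η = 1)
    (hβdec : ∀ η ∈ convexHull ℝ (Set.range T), ∑ i, β i η • T i = η)
    (p : V →₀ ℝ)
    (c : Fin n → ℝ) (hc : ∀ j, c j = ∑ η ∈ p.support, p η * α j η)
    (d : Fin m → ℝ) (hd : ∀ i, d i = ∑ j, c j * β i (S j)) :
    ∃ γ : Fin m → V → ℝ,
      (∀ η ∈ convexHull ℝ (Set.range S),
        (∀ i, γ i η ∈ Set.Icc (0:ℝ) 1) ∧
        (∑ i, γ i η = 1) ∧ (∑ i, γ i η • T i = η)) ∧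
      (∀ i, d i = ∑ η ∈ p.support, p η * γ i η) := by
  have hβS (j : Fin n) : IsBarycentricCoords T (fun i => β i (S j)) (S j) :=
    ⟨fun i => (hβ01 _ (hST j) i).1, hβsum _ (hST j), hβdec _ (hST j)⟩
  refine ⟨fun i η => ∑ j, α j η * β i (S j), fun η hη => ?_, fun i => ?_⟩
  · have hγ := IsBarycentricCoords.comp
      ⟨fun j => (hα01 η hη j).1, hαsum η hη, hαdec η hη⟩ hβS
    exact ⟨hγ.mem_Icc, hγ.sum_eq_one, hγ.sum_smul_eq⟩
  · simp only [hd, hc]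
    exact sum_sum_mul_eq_sum_mul_sum _ _ _ _

/-- Transitivity of surveys: if `C` is a survey of `P` on the skeleton
`(S, α)` and `D` is a survey of `C` on the skeleton `(T, β)`, then `D` is a
survey of `P`: there are decomposition functions `γ` making `(T, γ)` a
skeleton (on the convex hull containing the support of `P`) with
`P(D = Tᵢ) = E[γᵢ(P)]`. -/
theorem survey_transitive {V : Type*} [AddCommGroup V] [Module ℝ V]
    [FiniteDimensional ℝ V] {n m : ℕ}
    (S : Fin n → V) (α : Fin n → V → ℝ)
    (hα01 : ∀ η ∈ convexHull ℝ (Set.range S), ∀ i, α i η ∈ Set.Icc (0:ℝ) 1)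
    (hαsum : ∀ η ∈ convexHull ℝ (Set.range S), ∑ i, α i η = 1)
    (hαdec : ∀ η ∈ convexHull ℝ (Set.range S), ∑ i, α i η • S i = η)
    (T : Fin m → V) (β : Fin m → V → ℝ)
    (hST : ∀ j, S j ∈ convexHull ℝ (Set.range T))
    (hβ01 : ∀ η ∈ convexHull ℝ (Set.range T), ∀ i, β i η ∈ Set.Icc (0:ℝ) 1)
    (hβsum : ∀ η ∈ convexHull ℝ (Set.range T), ∑ i, β i η = 1)
    (hβdec : ∀ η ∈ convexHull ℝ (Set.range T), ∑ i, β i η • T i = η)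
    (p : V →₀ ℝ) (hp0 : ∀ η, 0 ≤ p η) (hp1 : ∑ η ∈ p.support, p η = 1)
    (hpsupp : (p.support : Set V) ⊆ convexHull ℝ (Set.range S))
    (c : Fin n → ℝ) (hc : ∀ j, c j = ∑ η ∈ p.support, p η * α j η)
    (d : Fin m → ℝ) (hd : ∀ i, d i = ∑ j, c j * β i (S j)) :
    ∃ γ : Fin m → V → ℝ,
      (∀ η ∈ convexHull ℝ (Set.range S),
        (∀ i, γ i η ∈ Set.Icc (0:ℝ) 1) ∧
        (∑ i, γ i η = 1) ∧ (∑ i, γ i η • T i = η)) ∧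
      (∀ i, d i = ∑ η ∈ p.support, p η * γ i η) :=
  survey_transitive_general S α hα01 hαsum hαdec T β hST hβ01 hβsum hβdec p c hc d hd
end

section
/- Mixtures of surveys are surveys: Let P₁ and P₂ be finitely-supported distributions on a finite-dimensional real vector space V, and let C₁, C₂ be surveys of P₁, P₂ respectively. Fix p ∈ [0,1], and define P as the mixture p·P₁ + (1−p)·P₂ and C as the mixture p·C₁ + (1−p)·C₂ (as distributions). Then C is a survey of P. -/
/-!
Surveys of nonnegative distributions form a convex cone, and a mixture is a nonnegative
combination. Scaling `(p, c)` keeps the skeleton. For a sum, concatenate the skeletons `S₁, S₂`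
and split each point `η` in the ratio `p₁ η : p₂ η`, i.e.
`α(η) = (p₁ η • α₁(η), p₂ η • α₂(η)) / (p₁ + p₂) η`. The weights `(p₁ + p₂) η • α(η)` are then
those of the two surveys side by side, so the probabilities of the new survey are the sums of the
old ones. Points of mass zero still need a decomposition; any skeleton of the concatenation
supplies one.
-/

open Finset

/-- `c` is a survey of `p`: there is a skeleton `(S, α)` whose convex hull
contains the support of `p`, such that the probability that the survey equals
`v` is `∑_{i : Sᵢ = v} E[αᵢ(p)]`. -/
def IsSurvey {V : Type*} [AddCommGroup V] [Module ℝ V] [DecidableEq V]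
    (p c : V →₀ ℝ) : Prop :=
  ∃ (n : ℕ) (S : Fin n → V) (α : Fin n → V → ℝ),
    (∀ η ∈ convexHull ℝ (Set.range S),
      (∀ i, α i η ∈ Set.Icc (0:ℝ) 1) ∧
      (∑ i, α i η = 1) ∧ (∑ i, α i η • S i = η)) ∧
    ((p.support : Set V) ⊆ convexHull ℝ (Set.range S)) ∧
    (∀ v, c v = ∑ i ∈ Finset.univ.filter (fun i => S i = v),
      ∑ η ∈ p.support, p η * α i η)

section

variable {V : Type*} {n n₁ n₂ : ℕ}

noncomputable def normalizeWeights (P : V → ℝ) (w : V → Fin n → ℝ) (α₀ : Fin n → V → ℝ) :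
    Fin n → V → ℝ :=
  fun i η => if P η = 0 then α₀ i η else (P η)⁻¹ * w η i

lemma mul_normalizeWeights {P : V → ℝ} {η : V} (h : P η ≠ 0) (w : V → Fin n → ℝ)
    (α₀ : Fin n → V → ℝ) (i : Fin n) : P η * normalizeWeights P w α₀ i η = w η i := by
  simp [normalizeWeights, h]

lemma Fin.sum_filter_append {α M : Type*} [DecidableEq α] [AddCommMonoid M]
    (S₁ : Fin n₁ → α) (S₂ : Fin n₂ → α) (f₁ : Fin n₁ → M) (f₂ : Fin n₂ → M) (v : α) :
    ∑ i ∈ univ.filter (fun i => Fin.append S₁ S₂ i = v), Fin.append f₁ f₂ i =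
      ∑ i ∈ univ.filter (fun i => S₁ i = v), f₁ i +
        ∑ i ∈ univ.filter (fun i => S₂ i = v), f₂ i := by
  simp [sum_filter, Fin.sum_univ_add]

lemma Finsupp.sum_mul_of_support_subset {ι R : Type*} [NonUnitalNonAssocSemiring R]
    {p : ι →₀ R} {s : Finset ι} (hs : p.support ⊆ s) (f : ι → R) :
    ∑ η ∈ s, p η * f η = ∑ η ∈ p.support, p η * f η :=
  (Finsupp.sum_of_support_subset p hs (fun η r => r * f η) fun _ _ => zero_mul _).symm

lemma Finsupp.support_subset_support_add_left {ι : Type*} {p₁ p₂ : ι →₀ ℝ}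
    (hp₁ : ∀ η, 0 ≤ p₁ η) (hp₂ : ∀ η, 0 ≤ p₂ η) : p₁.support ⊆ (p₁ + p₂).support := by
  intro η hη
  rw [Finsupp.mem_support_iff] at hη ⊢
  exact fun h => hη ((add_eq_zero_iff_of_nonneg (hp₁ η) (hp₂ η)).1 h).1

variable [AddCommGroup V] [Module ℝ V]

section Weighting

def IsWeighting (S : Fin n → V) (m : ℝ) (η : V) (a : Fin n → ℝ) : Prop :=
  (∀ i, 0 ≤ a i) ∧ ∑ i, a i = m ∧ ∑ i, a i • S i = m • η

lemma isWeighting_zero (S : Fin n → V) (η : V) : IsWeighting S 0 η 0 := by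
  simp [IsWeighting]

variable {S : Fin n → V} {m : ℝ} {η : V} {a : Fin n → ℝ}

lemma IsWeighting.mass_nonneg (h : IsWeighting S m η a) : 0 ≤ m :=
  h.2.1 ▸ sum_nonneg fun i _ => h.1 i

lemma IsWeighting.smul (h : IsWeighting S m η a) {c : ℝ} (hc : 0 ≤ c) :
    IsWeighting S (c * m) η (c • a) := by
  obtain ⟨h0, h1, h2⟩ := h
  refine ⟨fun i => mul_nonneg hc (h0 i), ?_, ?_⟩
  · simp [← mul_sum, h1]
  · simp [mul_smul, ← smul_sum, h2]

lemma IsWeighting.append {S₁ : Fin n₁ → V} {S₂ : Fin n₂ → V} {m₁ m₂ : ℝ}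
    {a₁ : Fin n₁ → ℝ} {a₂ : Fin n₂ → ℝ}
    (h₁ : IsWeighting S₁ m₁ η a₁) (h₂ : IsWeighting S₂ m₂ η a₂) :
    IsWeighting (Fin.append S₁ S₂) (m₁ + m₂) η (Fin.append a₁ a₂) := by
  obtain ⟨h₁0, h₁1, h₁2⟩ := h₁
  obtain ⟨h₂0, h₂1, h₂2⟩ := h₂
  refine ⟨Fin.addCases (by simpa using h₁0) (by simpa using h₂0), ?_, ?_⟩
  · simp [Fin.sum_univ_add, h₁1, h₂1]
  · simp [Fin.sum_univ_add, h₁2, h₂2, add_smul]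

lemma isWeighting_one_iff :
    IsWeighting S 1 η a ↔
      (∀ i, a i ∈ Set.Icc (0:ℝ) 1) ∧ ∑ i, a i = 1 ∧ ∑ i, a i • S i = η := by
  refine ⟨fun ⟨h0, h1, h2⟩ => ⟨fun i => ⟨h0 i, ?_⟩, h1, by simpa using h2⟩,
    fun ⟨h0, h1, h2⟩ => ⟨fun i => (h0 i).1, h1, by simpa using h2⟩⟩
  exact h1 ▸ single_le_sum (fun j _ => h0 j) (mem_univ i)

lemma exists_isWeighting_one (hη : η ∈ convexHull ℝ (Set.range S)) :
    ∃ a, IsWeighting S 1 η a := by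
  classical
  rw [convexHull_range_eq_exists_affineCombination] at hη
  obtain ⟨s, w, hw0, hw1, rfl⟩ := hη
  refine ⟨fun i => if i ∈ s then w i else 0, fun i => ?_, ?_, ?_⟩
  · dsimp only
    split_ifs with hi
    exacts [hw0 i hi, le_rfl]
  · simpa [sum_ite_mem] using hw1
  · simp [ite_smul, sum_ite_mem, affineCombination_eq_linear_combination s S w hw1]

end Weighting

def IsSkeleton (S : Fin n → V) (α : Fin n → V → ℝ) : Prop :=
  ∀ η ∈ convexHull ℝ (Set.range S), IsWeighting S 1 η (fun i => α i η)

lemma exists_isSkeleton (S : Fin n → V) : ∃ α, IsSkeleton S α := by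
  choose! α hα using fun η (hη : η ∈ convexHull ℝ (Set.range S)) => exists_isWeighting_one hη
  exact ⟨fun i η => α η i, hα⟩

lemma IsSkeleton.isWeighting_smul {S : Fin n → V} {α : Fin n → V → ℝ} (hα : IsSkeleton S α)
    {p : V →₀ ℝ} (hp : ∀ η, 0 ≤ p η) (hsupp : (p.support : Set V) ⊆ convexHull ℝ (Set.range S))
    (η : V) : IsWeighting S (p η) η (p η • fun i => α i η) := by
  by_cases h : p η = 0
  · simpa [h] using isWeighting_zero S η
  · simpa using (hα η (hsupp (Finsupp.mem_support_iff.2 h))).smul (hp η)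

lemma isSkeleton_normalizeWeights {S : Fin n → V} {P : V → ℝ} {w : V → Fin n → ℝ}
    (hw : ∀ η, IsWeighting S (P η) η (w η)) {α₀ : Fin n → V → ℝ} (hα₀ : IsSkeleton S α₀) :
    IsSkeleton S (normalizeWeights P w α₀) := by
  intro η hη
  by_cases h : P η = 0
  · simpa [normalizeWeights, h] using hα₀ η hη
  · simp only [normalizeWeights, h, if_false]
    exact inv_mul_cancel₀ h ▸ (hw η).smul (inv_nonneg.2 (hw η).mass_nonneg)

variable [DecidableEq V]

lemma isSurvey_iff {p c : V →₀ ℝ} :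
    IsSurvey p c ↔ ∃ (n : ℕ) (S : Fin n → V) (α : Fin n → V → ℝ), IsSkeleton S α ∧
      (p.support : Set V) ⊆ convexHull ℝ (Set.range S) ∧
      ∀ v, c v = ∑ i ∈ univ.filter (fun i => S i = v), ∑ η ∈ p.support, p η * α i η := by
  simp only [IsSurvey, IsSkeleton, isWeighting_one_iff]

lemma IsSurvey.smul {p c : V →₀ ℝ} (h : IsSurvey p c) (t : ℝ) : IsSurvey (t • p) (t • c) := by
  obtain ⟨n, S, α, hα, hsupp, hc⟩ := h
  refine ⟨n, S, α, hα, (coe_subset.2 Finsupp.support_smul).trans hsupp, fun v => ?_⟩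
  rw [Finsupp.smul_apply, smul_eq_mul, hc, mul_sum]
  refine sum_congr rfl fun i _ => ?_
  rw [mul_sum, ← Finsupp.sum_mul_of_support_subset Finsupp.support_smul]
  simp only [Finsupp.smul_apply, smul_eq_mul, mul_assoc]

lemma IsSurvey.add {p₁ p₂ c₁ c₂ : V →₀ ℝ} (hp₁ : ∀ η, 0 ≤ p₁ η) (hp₂ : ∀ η, 0 ≤ p₂ η)
    (h₁ : IsSurvey p₁ c₁) (h₂ : IsSurvey p₂ c₂) : IsSurvey (p₁ + p₂) (c₁ + c₂) := by
  rw [isSurvey_iff] at h₁ h₂ ⊢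
  obtain ⟨n₁, S₁, α₁, hα₁, hsupp₁, hc₁⟩ := h₁
  obtain ⟨n₂, S₂, α₂, hα₂, hsupp₂, hc₂⟩ := h₂
  obtain ⟨α₀, hα₀⟩ := exists_isSkeleton (Fin.append S₁ S₂)
  let w : V → Fin (n₁ + n₂) → ℝ := fun η =>
    Fin.append (p₁ η • fun i => α₁ i η) (p₂ η • fun i => α₂ i η)
  have hw (η : V) : IsWeighting (Fin.append S₁ S₂) ((p₁ + p₂) η) η (w η) :=
    (hα₁.isWeighting_smul hp₁ hsupp₁ η).append (hα₂.isWeighting_smul hp₂ hsupp₂ η)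
  have hsum_w (i : Fin (n₁ + n₂)) : ∑ η ∈ (p₁ + p₂).support, w η i =
      Fin.append (fun j => ∑ η ∈ p₁.support, p₁ η * α₁ j η)
        (fun j => ∑ η ∈ p₂.support, p₂ η * α₂ j η) i := by
    refine Fin.addCases (fun j => ?_) (fun j => ?_) i
    · simpa [w] using Finsupp.sum_mul_of_support_subset
        (Finsupp.support_subset_support_add_left hp₁ hp₂) (α₁ j)
    · simpa [w] using Finsupp.sum_mul_of_support_subset
        (add_comm p₁ p₂ ▸ Finsupp.support_subset_support_add_left hp₂ hp₁) (α₂ j)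
  refine ⟨n₁ + n₂, Fin.append S₁ S₂, normalizeWeights ⇑(p₁ + p₂) w α₀,
    isSkeleton_normalizeWeights hw hα₀, ?_, fun v => ?_⟩
  · intro η hη
    rcases mem_union.1 (Finsupp.support_add hη) with h | h
    · refine convexHull_mono (Set.range_subset_iff.2 fun i => ?_) (hsupp₁ h)
      exact Set.mem_range.2 ⟨_, Fin.append_left S₁ S₂ i⟩
    · refine convexHull_mono (Set.range_subset_iff.2 fun i => ?_) (hsupp₂ h)
      exact Set.mem_range.2 ⟨_, Fin.append_right S₁ S₂ i⟩
  · rw [Finsupp.add_apply, hc₁, hc₂, ← Fin.sum_filter_append]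
    refine sum_congr rfl fun i _ => ?_
    rw [← hsum_w]
    exact sum_congr rfl fun η hη =>
      (mul_normalizeWeights (Finsupp.mem_support_iff.1 hη) w α₀ i).symm

end

theorem mixture_of_surveys_general {V : Type*} [AddCommGroup V] [Module ℝ V]
    [DecidableEq V]
    (p₁ p₂ c₁ c₂ : V →₀ ℝ)
    (hp₁0 : ∀ η, 0 ≤ p₁ η)
    (hp₂0 : ∀ η, 0 ≤ p₂ η)
    (h₁ : IsSurvey p₁ c₁) (h₂ : IsSurvey p₂ c₂)
    (t : ℝ) (ht0 : 0 ≤ t) (ht1 : t ≤ 1) :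
    IsSurvey (t • p₁ + (1 - t) • p₂) (t • c₁ + (1 - t) • c₂) :=
  (h₁.smul t).add (fun η => mul_nonneg ht0 (hp₁0 η))
    (fun η => mul_nonneg (sub_nonneg.2 ht1) (hp₂0 η)) (h₂.smul (1 - t))

/-- Mixtures of surveys are surveys: if `C₁, C₂` are surveys of `P₁, P₂`
respectively and `t ∈ [0,1]`, then `t·C₁ + (1−t)·C₂` is a survey of
`t·P₁ + (1−t)·P₂`. -/
theorem mixture_of_surveys {V : Type*} [AddCommGroup V] [Module ℝ V]
    [FiniteDimensional ℝ V] [DecidableEq V]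
    (p₁ p₂ c₁ c₂ : V →₀ ℝ)
    (hp₁0 : ∀ η, 0 ≤ p₁ η) (hp₁1 : ∑ η ∈ p₁.support, p₁ η = 1)
    (hp₂0 : ∀ η, 0 ≤ p₂ η) (hp₂1 : ∑ η ∈ p₂.support, p₂ η = 1)
    (h₁ : IsSurvey p₁ c₁) (h₂ : IsSurvey p₂ c₂)
    (t : ℝ) (ht0 : 0 ≤ t) (ht1 : t ≤ 1) :
    IsSurvey (t • p₁ + (1 - t) • p₂) (t • c₁ + (1 - t) • c₂) :=
  mixture_of_surveys_general p₁ p₂ c₁ c₂ hp₁0 hp₂0 h₁ h₂ t ht0 ht1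
end

section
/- Survey commutes with the reweighted push-forward (r = 1 case): Let V, W be finite-dimensional real vector spaces, f : V → W affine with ‖f(η)‖ > 0 on the relevant supports, P a finitely-supported distribution on V, and C a survey of P on a skeleton (S, α₁,…,αₙ). Define distributions Q and D on W by P(Q = η) ∝ E[‖f(P)‖ · 1[f(P) ∝ η]] and P(D = η) ∝ E[‖f(C)‖ · 1[f(C) ∝ η]], where u ∝ v means u and v are positive scalar multiples of each other and ‖·‖ is the coordinate sum. Then D is a survey of Q. -/
/-!
A point `x` of the support of `P` has convex coordinates `α x` on `S`. Since `f` is affine they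
are also coordinates of `f x` on the `f (S i)`, and since `‖·‖` is linear, the normalization
`f x / ‖f x‖` has the convex coordinates `α i x * ‖f (S i)‖ / ‖f x‖` on the normalized base
points `f (S i) / ‖f (S i)‖`. Coordinates of a point `η` of the support of `Q` are obtained by
averaging these over the fibre of `η`, with the weights `P(x) ‖f x‖` that define `Q`. Averaging
them once more against `Q` therefore gives back `∑ₓ P(x) α i x ‖f (S i)‖ / Z`, that is
`E[αᵢ(P)] ‖f (S i)‖ / Z`, the mass that `D` puts on the `i`-th base point.
-/

open Finset

section ConvexCoords

variable {𝕜 ι E F : Type*} [Field 𝕜] [LinearOrder 𝕜] [Fintype ι]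
  [AddCommGroup E] [Module 𝕜 E] [AddCommGroup F] [Module 𝕜 F]

structure IsConvexCoords (v : ι → E) (a : ι → 𝕜) (x : E) : Prop where
  nonneg : ∀ i, 0 ≤ a i
  sum_eq_one : ∑ i, a i = 1
  sum_smul_eq : ∑ i, a i • v i = x

namespace IsConvexCoords

variable {v : ι → E} {a : ι → 𝕜} {x : E}

lemma apply_linearMap (h : IsConvexCoords v a x) (N : E →ₗ[𝕜] 𝕜) :
    N x = ∑ i, a i * N (v i) := by
  simp [← h.sum_smul_eq, map_sum]

variable [IsStrictOrderedRing 𝕜]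

lemma mem_Icc (h : IsConvexCoords v a x) (i : ι) : a i ∈ Set.Icc (0 : 𝕜) 1 :=
  ⟨h.nonneg i, h.sum_eq_one ▸ single_le_sum (fun j _ => h.nonneg j) (mem_univ i)⟩

lemma map {f : E → F}
    (hf : ∀ (u u' : E) (s t : 𝕜), 0 ≤ s → 0 ≤ t → s + t = 1 →
      f (s • u + t • u') = s • f u + t • f u')
    (h : IsConvexCoords v a x) : IsConvexCoords (f ∘ v) a (f x) := by
  refine ⟨h.nonneg, h.sum_eq_one, ?_⟩
  -- Test against every linear functional `φ`: `φ ∘ f` is convex and concave, so Jensen's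
  -- inequality holds in both directions.
  rw [← h.sum_smul_eq, ← sub_eq_zero, ← Module.forall_dual_apply_eq_zero_iff 𝕜]
  intro φ
  have hconvex : ConvexOn 𝕜 Set.univ (φ ∘ f) :=
    ⟨convex_univ, fun u _ u' _ s t hs ht hst => by simp [hf u u' s t hs ht hst]⟩
  have hconcave : ConcaveOn 𝕜 Set.univ (φ ∘ f) :=
    ⟨convex_univ, fun u _ u' _ s t hs ht hst => by simp [hf u u' s t hs ht hst]⟩
  have h₀ : ∀ i ∈ univ, 0 ≤ a i := fun i _ => h.nonneg i
  have hmem : ∀ i ∈ univ, v i ∈ Set.univ := fun i _ => Set.mem_univ _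
  rw [map_sub, sub_eq_zero]
  simpa using (le_antisymm (hconvex.map_sum_le h₀ h.sum_eq_one hmem)
    (hconcave.le_map_sum h₀ h.sum_eq_one hmem)).symm

lemma apply_linearMap_pos (h : IsConvexCoords v a x) (N : E →ₗ[𝕜] 𝕜)
    (hN : ∀ i, 0 < N (v i)) : 0 < N x := by
  obtain ⟨j, hj⟩ : ∃ j, a j ≠ 0 := by
    by_contra! h0
    simpa [h0] using h.sum_eq_one
  rw [h.apply_linearMap N]
  exact sum_pos' (fun i _ => mul_nonneg (h.nonneg i) (hN i).le)
    ⟨j, mem_univ j, mul_pos ((h.nonneg j).lt_of_ne' hj) (hN j)⟩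

lemma normalize (h : IsConvexCoords v a x) (N : E →ₗ[𝕜] 𝕜) (hN : ∀ i, 0 < N (v i)) :
    IsConvexCoords (fun i => (N (v i))⁻¹ • v i) (fun i => a i * N (v i) / N x)
      ((N x)⁻¹ • x) := by
  have hNx : N x = ∑ i, a i * N (v i) := h.apply_linearMap N
  have hpos : 0 < N x := h.apply_linearMap_pos N hN
  refine ⟨fun i => div_nonneg (mul_nonneg (h.nonneg i) (hN i).le) hpos.le, ?_, ?_⟩
  · rw [← sum_div, ← hNx, div_self hpos.ne']
  · calc ∑ i, (a i * N (v i) / N x) • (N (v i))⁻¹ • v i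
        = (N x)⁻¹ • ∑ i, a i • v i := by
          rw [smul_sum]
          refine sum_congr rfl fun i _ => ?_
          rw [smul_smul, smul_smul]
          field_simp [(hN i).ne']
      _ = (N x)⁻¹ • x := by rw [h.sum_smul_eq]

lemma _root_.convex_setOf_isConvexCoords (v : ι → E) (x : E) :
    Convex 𝕜 {a : ι → 𝕜 | IsConvexCoords v a x} := by
  intro a ha b hb s t hs ht hst
  refine ⟨fun i => ?_, ?_, ?_⟩
  · simpa using add_nonneg (mul_nonneg hs (ha.nonneg i)) (mul_nonneg ht (hb.nonneg i))
  · simp [sum_add_distrib, ← mul_sum, ha.sum_eq_one, hb.sum_eq_one, hst]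
  · simp only [Pi.add_apply, Pi.smul_apply, smul_eq_mul, add_smul, mul_smul, sum_add_distrib,
      ← smul_sum, ha.sum_smul_eq, hb.sum_smul_eq]
    rw [← add_smul, hst, one_smul]

end IsConvexCoords

end ConvexCoords

section Fiber

variable {𝕜 ι E X Y : Type*} [Field 𝕜] [LinearOrder 𝕜] [IsStrictOrderedRing 𝕜]
  [AddCommGroup E] [Module 𝕜 E] [DecidableEq Y] {s : Finset X} {w : X → 𝕜}

def fiberMass (s : Finset X) (w : X → 𝕜) (ν : X → Y) (y : Y) : 𝕜 := ∑ x ∈ s with ν x = y, w x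

lemma fiberMass_pos (hw : ∀ x ∈ s, 0 < w x) {ν : X → Y} {y : Y} (hy : y ∈ s.image ν) :
    0 < fiberMass s w ν y := by
  obtain ⟨x, hx, rfl⟩ := mem_image.mp hy
  exact sum_pos (fun x' hx' => hw x' (mem_filter.mp hx').1) ⟨x, mem_filter.mpr ⟨hx, rfl⟩⟩

lemma isConvexCoords_centerMass_fiber [Fintype ι] [DecidableEq E] (hw : ∀ x ∈ s, 0 < w x)
    {T : ι → E} {β : X → ι → 𝕜} {ν : X → E} (hβ : ∀ x ∈ s, IsConvexCoords T (β x) (ν x))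
    {y : E} (hy : y ∈ s.image ν) :
    IsConvexCoords T ({x ∈ s | ν x = y}.centerMass w β) y :=
  (convex_setOf_isConvexCoords T y).centerMass_mem
    (fun x hx => (hw x (mem_filter.mp hx).1).le) (fiberMass_pos hw hy)
    (fun x hx => (mem_filter.mp hx).2 ▸ hβ x (mem_filter.mp hx).1)

lemma sum_fiberMass_smul_centerMass (hw : ∀ x ∈ s, 0 < w x) (ν : X → Y) (z : X → E) :
    ∑ y ∈ s.image ν, fiberMass s w ν y • {x ∈ s | ν x = y}.centerMass w z =
      ∑ x ∈ s, w x • z x := by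
  rw [← sum_fiberwise_of_maps_to (g := ν) (t := s.image ν) fun x hx => mem_image_of_mem ν hx]
  refine sum_congr rfl fun y hy => ?_
  have hmass := (fiberMass_pos hw hy).ne'
  unfold fiberMass at hmass ⊢
  rw [centerMass, smul_smul, mul_inv_cancel₀ hmass, one_smul]

lemma sum_fiberMass_mul_centerMass_apply (hw : ∀ x ∈ s, 0 < w x) (ν : X → Y) (z : X → ι → 𝕜)
    (i : ι) :
    ∑ y ∈ s.image ν, fiberMass s w ν y * {x ∈ s | ν x = y}.centerMass w z i =
      ∑ x ∈ s, w x * z x i := by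
  simpa using congrFun (sum_fiberMass_smul_centerMass hw ν z) i

end Fiber

section Pushforward

variable {𝕜 ι V W : Type*} [Field 𝕜] [AddCommGroup W] [Module 𝕜 W]
  (N : W →ₗ[𝕜] 𝕜) {f : V → W} {S : ι → V} {α : ι → V → 𝕜} {s : Finset V}

/-- The convex coordinates of `f x / N (f x)` on the points `f (S i) / N (f (S i))`
(`IsConvexCoords.normalize`). -/
def pushCoords (f : V → W) (S : ι → V) (α : ι → V → 𝕜) (x : V) (i : ι) : 𝕜 :=
  α i x * N (f (S i)) / N (f x)

lemma sum_mul_pushCoords (hNf : ∀ x ∈ s, N (f x) ≠ 0) (p : V → 𝕜) (i : ι) :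
    ∑ x ∈ s, p x * N (f x) * pushCoords N f S α x i =
      (∑ x ∈ s, p x * α i x) * N (f (S i)) := by
  rw [sum_mul]
  refine sum_congr rfl fun x hx => ?_
  rw [pushCoords]
  field_simp [hNf x hx]

variable [LinearOrder 𝕜] [IsStrictOrderedRing 𝕜] [Fintype ι] [AddCommGroup V] [Module 𝕜 V]

lemma sum_mul_apply_eq_sum_mul_apply
    (hf : ∀ (u u' : V) (a b : 𝕜), 0 ≤ a → 0 ≤ b → a + b = 1 →
      f (a • u + b • u') = a • f u + b • f u')
    (hS : ∀ x ∈ s, IsConvexCoords S (α · x) x) (p : V → 𝕜) :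
    ∑ x ∈ s, p x * N (f x) = ∑ i, (∑ x ∈ s, p x * α i x) * N (f (S i)) := by
  simp_rw [sum_mul, mul_assoc]
  rw [sum_comm]
  refine sum_congr rfl fun x hx => ?_
  rw [((hS x hx).map hf).apply_linearMap N, mul_sum]
  rfl

end Pushforward

theorem survey_commutes_pushforward_one_general {V : Type*} [AddCommGroup V]
    [Module ℝ V] {m n : ℕ} [DecidableEq (Fin m → ℝ)]
    (f : V → (Fin m → ℝ))
    (hf : ∀ (u v : V) (a b : ℝ), 0 ≤ a → 0 ≤ b → a + b = 1 →
      f (a • u + b • v) = a • f u + b • f v)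
    (N : (Fin m → ℝ) → ℝ) (hN : ∀ w, N w = ∑ a, w a)
    (S : Fin n → V) (α : Fin n → V → ℝ)
    (hα01 : ∀ η ∈ convexHull ℝ (Set.range S), ∀ i, α i η ∈ Set.Icc (0:ℝ) 1)
    (hαsum : ∀ η ∈ convexHull ℝ (Set.range S), ∑ i, α i η = 1)
    (hαdec : ∀ η ∈ convexHull ℝ (Set.range S), ∑ i, α i η • S i = η)
    (hpos : ∀ η ∈ convexHull ℝ (Set.range S), 0 < N (f η))
    (p : V →₀ ℝ) (hp0 : ∀ η, 0 ≤ p η)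
    (hpsupp : (p.support : Set V) ⊆ convexHull ℝ (Set.range S))
    (c : Fin n → ℝ) (hc : ∀ i, c i = ∑ η ∈ p.support, p η * α i η)
    (Zp : ℝ) (hZp : Zp = ∑ x ∈ p.support, p x * N (f x))
    (Zc : ℝ) (hZc : Zc = ∑ i, c i * N (f (S i)))
    (q : (Fin m → ℝ) → ℝ)
    (hq : ∀ η, q η = (∑ x ∈ p.support,
      p x * N (f x) * (if (N (f x))⁻¹ • f x = η then 1 else 0)) / Zp)
    (d : (Fin m → ℝ) → ℝ)
    (hd : ∀ η, d η = (∑ i, c i * N (f (S i)) *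
      (if (N (f (S i)))⁻¹ • f (S i) = η then 1 else 0)) / Zc)
    (Qsupp : Finset (Fin m → ℝ))
    (hQsupp : Qsupp = p.support.image fun x => (N (f x))⁻¹ • f x) :
    ∃ (k : ℕ) (T : Fin k → (Fin m → ℝ)) (γ : Fin k → (Fin m → ℝ) → ℝ),
      (∀ i, ∃ j, T i = (N (f (S j)))⁻¹ • f (S j)) ∧
      (∀ η ∈ (Qsupp : Set (Fin m → ℝ)),
        (∀ i, γ i η ∈ Set.Icc (0:ℝ) 1) ∧
        (∑ i, γ i η = 1) ∧ (∑ i, γ i η • T i = η)) ∧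
      (∀ v, d v = ∑ i ∈ Finset.univ.filter (fun i => T i = v),
        ∑ η ∈ Qsupp, q η * γ i η) := by
  obtain ⟨N, rfl⟩ : ∃ L : (Fin m → ℝ) →ₗ[ℝ] ℝ, ⇑L = N :=
    ⟨∑ a, LinearMap.proj a, funext fun w => by simp [hN]⟩
  subst hQsupp
  set ν : V → Fin m → ℝ := fun x => (N (f x))⁻¹ • f x
  set w : V → ℝ := fun x => p x * N (f x)
  set γ : Fin n → (Fin m → ℝ) → ℝ := fun i η =>
    {x ∈ p.support | ν x = η}.centerMass w (pushCoords N f S α) i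
  have hS : ∀ x ∈ p.support, IsConvexCoords S (α · x) x := fun x hx =>
    ⟨fun i => (hα01 x (hpsupp hx) i).1, hαsum x (hpsupp hx), hαdec x (hpsupp hx)⟩
  have hNS : ∀ i, 0 < N (f (S i)) := fun i => hpos _ (subset_convexHull ℝ _ ⟨i, rfl⟩)
  have hNf : ∀ x ∈ p.support, 0 < N (f x) := fun x hx => hpos x (hpsupp hx)
  have hw : ∀ x ∈ p.support, 0 < w x := fun x hx =>
    mul_pos ((hp0 x).lt_of_ne' (Finsupp.mem_support_iff.mp hx)) (hNf x hx)
  have hZ : Zp = Zc := by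
    simp only [hZp, hZc, hc]
    exact sum_mul_apply_eq_sum_mul_apply N hf hS p
  have hq' : ∀ η, q η = fiberMass p.support w ν η / Zp := fun η => by
    rw [hq, fiberMass, sum_filter]
    simp only [mul_ite, mul_one, mul_zero]
    rfl
  have hγ : ∀ i, ∑ η ∈ p.support.image ν, q η * γ i η = c i * N (f (S i)) / Zc := fun i => by
    simp only [hq', div_mul_eq_mul_div, ← sum_div, γ, sum_fiberMass_mul_centerMass_apply hw, w,
      sum_mul_pushCoords N fun x hx => (hNf x hx).ne', hc, hZ]
  refine ⟨n, fun j => (N (f (S j)))⁻¹ • f (S j), γ, fun i => ⟨i, rfl⟩, fun η hη => ?_,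
    fun v => ?_⟩
  · have h := isConvexCoords_centerMass_fiber hw
      (fun x hx => ((hS x hx).map hf).normalize N hNS) hη
    exact ⟨h.mem_Icc, h.sum_eq_one, h.sum_smul_eq⟩
  · simp only [hγ, hd, sum_filter, sum_div, mul_ite, mul_one, mul_zero, ite_div, zero_div]

/-- Surveying commutes with the reweighted push-forward (case `r = 1`): if `C`
is a survey of `P` on a skeleton `(S, α)`, `f` is affine with positive
coordinate sums, `Q` is the distribution of the normalization of `f(P)`
reweighted by `‖f(P)‖`, and `D` is the analogous distribution built from `C`,
then `D` is a survey of `Q` (on a skeleton with base set the normalized images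
of the base points). -/
theorem survey_commutes_pushforward_one {V : Type*} [AddCommGroup V]
    [Module ℝ V] [FiniteDimensional ℝ V] {m n : ℕ} [DecidableEq (Fin m → ℝ)]
    (f : V → (Fin m → ℝ))
    (hf : ∀ (u v : V) (a b : ℝ), 0 ≤ a → 0 ≤ b → a + b = 1 →
      f (a • u + b • v) = a • f u + b • f v)
    (N : (Fin m → ℝ) → ℝ) (hN : ∀ w, N w = ∑ a, w a)
    (S : Fin n → V) (α : Fin n → V → ℝ)
    (hα01 : ∀ η ∈ convexHull ℝ (Set.range S), ∀ i, α i η ∈ Set.Icc (0:ℝ) 1)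
    (hαsum : ∀ η ∈ convexHull ℝ (Set.range S), ∑ i, α i η = 1)
    (hαdec : ∀ η ∈ convexHull ℝ (Set.range S), ∑ i, α i η • S i = η)
    (hpos : ∀ η ∈ convexHull ℝ (Set.range S), 0 < N (f η))
    (p : V →₀ ℝ) (hp0 : ∀ η, 0 ≤ p η) (hp1 : ∑ η ∈ p.support, p η = 1)
    (hpsupp : (p.support : Set V) ⊆ convexHull ℝ (Set.range S))
    (c : Fin n → ℝ) (hc : ∀ i, c i = ∑ η ∈ p.support, p η * α i η)
    (Zp : ℝ) (hZp : Zp = ∑ x ∈ p.support, p x * N (f x))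
    (Zc : ℝ) (hZc : Zc = ∑ i, c i * N (f (S i)))
    (q : (Fin m → ℝ) → ℝ)
    (hq : ∀ η, q η = (∑ x ∈ p.support,
      p x * N (f x) * (if (N (f x))⁻¹ • f x = η then 1 else 0)) / Zp)
    (d : (Fin m → ℝ) → ℝ)
    (hd : ∀ η, d η = (∑ i, c i * N (f (S i)) *
      (if (N (f (S i)))⁻¹ • f (S i) = η then 1 else 0)) / Zc)
    (Qsupp : Finset (Fin m → ℝ))
    (hQsupp : Qsupp = p.support.image fun x => (N (f x))⁻¹ • f x) :
    ∃ (k : ℕ) (T : Fin k → (Fin m → ℝ)) (γ : Fin k → (Fin m → ℝ) → ℝ),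
      (∀ i, ∃ j, T i = (N (f (S j)))⁻¹ • f (S j)) ∧
      (∀ η ∈ (Qsupp : Set (Fin m → ℝ)),
        (∀ i, γ i η ∈ Set.Icc (0:ℝ) 1) ∧
        (∑ i, γ i η = 1) ∧ (∑ i, γ i η • T i = η)) ∧
      (∀ v, d v = ∑ i ∈ Finset.univ.filter (fun i => T i = v),
        ∑ η ∈ Qsupp, q η * γ i η) :=
  survey_commutes_pushforward_one_general f hf N hN S α hα01 hαsum hαdec hpos p hp0 hpsupp c hc Zp
    hZp Zc hZc q hq d hd Qsupp hQsupp
end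

section
/- Survey commutes with the reweighted push-forward (general r): Let f : V₁ × ⋯ × V_r → V be multi-affine with positive coordinate sums on the relevant supports. Let P₁,…,P_r be independent finitely-supported distributions on V₁,…,V_r and C₁,…,C_r their respective (independent) surveys. Define Q by P(Q = η) ∝ E[‖f(P₁,…,P_r)‖ · 1[f(P₁,…,P_r) ∝ η]] and D by P(D = η) ∝ E[‖f(C₁,…,C_r)‖ · 1[f(C₁,…,C_r) ∝ η]]. Then D is a survey of Q. -/
/-! Write `α_j(x) = ∏ᵢ αᵢ(jᵢ)(xᵢ)` for `j ∈ ∏ᵢ Fin nᵢ`. Expanding one coordinate at a time,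
multi-affinity gives `f x = ∑_j α_j(x) f(S_j)`, so, `N` being linear, an outcome `x` of mass
`p(x) N(f x)` splits into vertex masses `p(x) α_j(x) N(f S_j)` whose normalised barycentre is
`f x / N(f x)`. By independence `∑ₓ p(x) α_j(x) = ∏ᵢ cᵢ(jᵢ)`, so vertex `j` receives in total
the mass `c(j) N(f S_j)` that defines `D`, while conditioning on the value `η` of `f x / N(f x)`
decomposes each point `η` of the support of `Q` over the vertices. -/

def IsMultiaffine {ι : Type*} [DecidableEq ι] {V : ι → Type*} [∀ i, AddCommGroup (V i)]
    [∀ i, Module ℝ (V i)] {W : Type*} [AddCommGroup W] [Module ℝ W]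
    (f : (∀ i, V i) → W) : Prop :=
  ∀ (i : ι) (x : ∀ i, V i) (u v : V i) (a b : ℝ), 0 ≤ a → 0 ≤ b → a + b = 1 →
    f (Function.update x i (a • u + b • v)) =
      a • f (Function.update x i u) + b • f (Function.update x i v)

theorem map_sum_of_map_convex_combination {E κ ι : Type*} [AddCommGroup E] [Module ℝ E]
    {g : E → κ → ℝ}
    (hg : ∀ (u v : E) (a b : ℝ), 0 ≤ a → 0 ≤ b → a + b = 1 →
      g (a • u + b • v) = a • g u + b • g v)
    {t : Finset ι} {w : ι → ℝ} (hw₀ : ∀ i ∈ t, 0 ≤ w i) (hw₁ : ∑ i ∈ t, w i = 1) (u : ι → E) :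
    g (∑ i ∈ t, w i • u i) = ∑ i ∈ t, w i • g (u i) := by
  funext c
  have hconv : ConvexOn ℝ Set.univ (g · c) :=
    ⟨convex_univ, fun u _ v _ a b ha hb hab => (congrFun (hg u v a b ha hb hab) c).le⟩
  have hconc : ConcaveOn ℝ Set.univ (g · c) :=
    ⟨convex_univ, fun u _ v _ a b ha hb hab => (congrFun (hg u v a b ha hb hab) c).ge⟩
  simp only [Finset.sum_apply, Pi.smul_apply]
  exact le_antisymm (hconv.map_sum_le hw₀ hw₁ fun _ _ => trivial)
    (hconc.le_map_sum hw₀ hw₁ fun _ _ => trivial)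

theorem IsMultiaffine.comp_fin_cons {r : ℕ} {V : Fin (r + 1) → Type*} [∀ i, AddCommGroup (V i)]
    [∀ i, Module ℝ (V i)] {W : Type*} [AddCommGroup W] [Module ℝ W]
    {f : (∀ i, V i) → W} (hf : IsMultiaffine f) (x₀ : V 0) :
    IsMultiaffine fun y : ∀ i, V (Fin.succ i) => f (Fin.cons x₀ y) := by
  intro i y u v a b ha hb hab
  simp only [Fin.cons_update]
  exact hf i.succ _ u v a b ha hb hab

theorem IsMultiaffine.map_sum_pi {κ : Type*} : ∀ {r : ℕ} {V : Fin r → Type*}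
    [∀ i, AddCommGroup (V i)] [∀ i, Module ℝ (V i)] {ι : Fin r → Type*} [∀ i, Fintype (ι i)]
    {f : (∀ i, V i) → κ → ℝ}, IsMultiaffine f →
    ∀ {w : ∀ i, ι i → ℝ}, (∀ i k, 0 ≤ w i k) → (∀ i, ∑ k, w i k = 1) → ∀ (S : ∀ i, ι i → V i),
    f (fun i => ∑ k, w i k • S i k) = ∑ j : ∀ i, ι i, (∏ i, w i (j i)) • f (fun i => S i (j i))
  | 0, V, _, _, ι, _, f, _, w, _, _, S => by
    simp only [Finset.univ_eq_empty, Finset.prod_empty, one_smul, Fintype.sum_unique]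
    exact congrArg f (Subsingleton.elim _ _)
  | r + 1, V, _, _, ι, _, f, hf, w, hw₀, hw₁, S => by
    set x : ∀ i, V i := fun i => ∑ k, w i k • S i k
    have hupd : ∀ v, Function.update x 0 v = Fin.cons v (Fin.tail x) := fun v => by
      rw [← Fin.update_cons_zero (x 0), Fin.cons_self_tail]
    have hslot : f x = ∑ k, w 0 k • f (Fin.cons (S 0 k) (Fin.tail x)) := by
      calc f x = f (Function.update x 0 (∑ k, w 0 k • S 0 k)) := by rw [Function.update_eq_self]
        _ = ∑ k, w 0 k • f (Function.update x 0 (S 0 k)) :=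
          map_sum_of_map_convex_combination (g := fun u => f (Function.update x 0 u))
            (fun u v a b => hf 0 x u v a b) (fun k _ => hw₀ 0 k) (hw₁ 0) (S 0)
        _ = _ := by simp only [hupd]
    rw [hslot, ← (Fin.consEquiv ι).sum_comp, Fintype.sum_prod_type]
    refine Finset.sum_congr rfl fun k _ => ?_
    rw [show Fin.tail x = fun i => ∑ k, w i.succ k • S i.succ k from rfl,
      (hf.comp_fin_cons (S 0 k)).map_sum_pi (fun i => hw₀ i.succ) (fun i => hw₁ i.succ),
      Finset.smul_sum]
    refine Finset.sum_congr rfl fun j _ => ?_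
    rw [Fin.prod_univ_succ, mul_smul]
    congr 3
    ext i
    refine Fin.cases ?_ (fun i => ?_) i <;> simp [Fin.consEquiv]

namespace LinearMap

variable {E J : Type*} [AddCommGroup E] [Module ℝ E] [Fintype J] (φ : E →ₗ[ℝ] ℝ) (w : J → ℝ)
  (z : J → E)

theorem sum_mul_map_div_map_sum (hy : φ (∑ j, w j • z j) ≠ 0) :
    ∑ j, w j * φ (z j) / φ (∑ j, w j • z j) = 1 := by
  rw [← Finset.sum_div, div_eq_one_iff_eq hy, map_sum]
  simp only [map_smul, smul_eq_mul]

theorem sum_mul_map_div_map_sum_smul_inv_smul (hz : ∀ j, φ (z j) ≠ 0) :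
    ∑ j, (w j * φ (z j) / φ (∑ j, w j • z j)) • (φ (z j))⁻¹ • z j =
      (φ (∑ j, w j • z j))⁻¹ • ∑ j, w j • z j := by
  rw [Finset.smul_sum]
  refine Finset.sum_congr rfl fun j _ => ?_
  rw [smul_smul, smul_smul]
  congr 1
  field_simp [hz j]

end LinearMap

/-- `d` is the law of the vertex obtained by drawing `η ∼ q` and then `T i` with probability
`γ i η`, where `γ · η` writes `η` as a convex combination of the `T i`; a vertex may occur several
times in `T`. -/
def IsSurveyOf {E J : Type*} [AddCommGroup E] [Module ℝ E] [DecidableEq E] (vert : J → E)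
    (Qsupp : Finset E) (q d : E → ℝ) : Prop :=
  ∃ (k : ℕ) (T : Fin k → E) (γ : Fin k → E → ℝ), (∀ i, ∃ j, T i = vert j) ∧
    (∀ η ∈ (Qsupp : Set E),
      (∀ i, γ i η ∈ Set.Icc (0:ℝ) 1) ∧ (∑ i, γ i η = 1) ∧ (∑ i, γ i η • T i = η)) ∧
    (∀ v, d v = ∑ i ∈ Finset.univ.filter (fun i => T i = v), ∑ η ∈ Qsupp, q η * γ i η)

namespace Survey

variable {X J E : Type*} [DecidableEq E] {s : Finset X} {π : X → ℝ} {ν : X → E}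
  {K : X → J → ℝ}

variable (s π ν) in
def pushMass (η : E) : ℝ := ∑ x ∈ s with ν x = η, π x

variable (s π ν K) in
/-- The survey weight `γ_j(η)`: the conditional probability of vertex `j` given `ν = η` when an
outcome `x` of mass `π x` is split among the vertices according to `K x`. -/
noncomputable def condKernel (j : J) (η : E) : ℝ :=
  pushMass s (fun x => π x * K x j) ν η / pushMass s π ν η

theorem pushMass_pos (hπ : ∀ x ∈ s, 0 < π x) {η : E} (hη : η ∈ s.image ν) :
    0 < pushMass s π ν η := by
  obtain ⟨x, hx, rfl⟩ := Finset.mem_image.mp hη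
  exact Finset.sum_pos (fun y hy => hπ y (Finset.mem_filter.mp hy).1) ⟨x, by simp [hx]⟩

theorem sum_image_pushMass (φ : X → ℝ) : ∑ η ∈ s.image ν, pushMass s φ ν η = ∑ x ∈ s, φ x :=
  Finset.sum_fiberwise_of_maps_to (fun _ hx => Finset.mem_image_of_mem ν hx) φ

theorem condKernel_nonneg (hπ : ∀ x ∈ s, 0 ≤ π x) (hK₀ : ∀ x ∈ s, ∀ j, 0 ≤ K x j)
    (j : J) (η : E) : 0 ≤ condKernel s π ν K j η := by
  have hπ₀ : ∀ x ∈ {x ∈ s | ν x = η}, 0 ≤ π x := fun x hx => hπ x (Finset.mem_filter.mp hx).1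
  exact div_nonneg
    (Finset.sum_nonneg fun x hx => mul_nonneg (hπ₀ x hx) (hK₀ x (Finset.mem_filter.mp hx).1 j))
    (Finset.sum_nonneg hπ₀)

theorem pushMass_mul_condKernel (hπ : ∀ x ∈ s, 0 < π x) {η : E} (hη : η ∈ s.image ν) (j : J) :
    pushMass s π ν η * condKernel s π ν K j η = pushMass s (fun x => π x * K x j) ν η :=
  mul_div_cancel₀ _ (pushMass_pos hπ hη).ne'

variable [Fintype J]

theorem sum_condKernel (hπ : ∀ x ∈ s, 0 < π x) (hK₁ : ∀ x ∈ s, ∑ j, K x j = 1) {η : E}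
    (hη : η ∈ s.image ν) : ∑ j, condKernel s π ν K j η = 1 := by
  have hmass : ∑ j, pushMass s (fun x => π x * K x j) ν η = pushMass s π ν η := by
    simp only [pushMass]
    rw [Finset.sum_comm]
    refine Finset.sum_congr rfl fun x hx => ?_
    rw [← Finset.mul_sum, hK₁ x (Finset.mem_filter.mp hx).1, mul_one]
  simp only [condKernel, ← Finset.sum_div, hmass, div_self (pushMass_pos hπ hη).ne']

theorem sum_condKernel_smul [AddCommGroup E] [Module ℝ E] {T : J → E} (hπ : ∀ x ∈ s, 0 < π x)
    (hKT : ∀ x ∈ s, ∑ j, K x j • T j = ν x) {η : E} (hη : η ∈ s.image ν) :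
    ∑ j, condKernel s π ν K j η • T j = η := by
  have hmass : ∑ j, pushMass s (fun x => π x * K x j) ν η • T j = pushMass s π ν η • η := by
    simp only [pushMass, Finset.sum_smul]
    rw [Finset.sum_comm]
    refine Finset.sum_congr rfl fun x hx => ?_
    obtain ⟨hxs, rfl⟩ := Finset.mem_filter.mp hx
    simp only [mul_smul, ← Finset.smul_sum, hKT x hxs]
  simp only [condKernel, div_eq_inv_mul, mul_smul, ← Finset.smul_sum, hmass]
  rw [smul_smul, inv_mul_cancel₀ (pushMass_pos hπ hη).ne', one_smul]

theorem isSurveyOf_of_kernel [AddCommGroup E] [Module ℝ E] (T : J → E) (hπ : ∀ x ∈ s, 0 < π x)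
    (hK₀ : ∀ x ∈ s, ∀ j, 0 ≤ K x j) (hK₁ : ∀ x ∈ s, ∑ j, K x j = 1)
    (hKT : ∀ x ∈ s, ∑ j, K x j • T j = ν x) {q d : E → ℝ}
    (hq : ∀ η, q η = pushMass s π ν η / ∑ x ∈ s, π x)
    (hd : ∀ v, d v = (∑ j with T j = v, ∑ x ∈ s, π x * K x j) / ∑ j, ∑ x ∈ s, π x * K x j) :
    IsSurveyOf T (s.image ν) q d := by
  have hZ : ∑ j, ∑ x ∈ s, π x * K x j = ∑ x ∈ s, π x := by
    rw [Finset.sum_comm]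
    exact Finset.sum_congr rfl fun x hx => by rw [← Finset.mul_sum, hK₁ x hx, mul_one]
  have hmix : ∀ j, ∑ η ∈ s.image ν, q η * condKernel s π ν K j η =
      (∑ x ∈ s, π x * K x j) / ∑ x ∈ s, π x := by
    intro j
    simp only [hq, div_mul_eq_mul_div, ← Finset.sum_div]
    rw [Finset.sum_congr rfl fun η hη => pushMass_mul_condKernel hπ hη j, sum_image_pushMass]
  have hπ₀ : ∀ x ∈ s, 0 ≤ π x := fun x hx => (hπ x hx).le
  let e := (Fintype.equivFin J).symm
  refine ⟨Fintype.card J, T ∘ e, fun i => condKernel s π ν K (e i), fun i => ⟨e i, rfl⟩,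
    fun η hη => ⟨fun i => ⟨condKernel_nonneg hπ₀ hK₀ _ η, ?_⟩, ?_, ?_⟩, fun v => ?_⟩
  · exact (Finset.single_le_sum (fun j _ => condKernel_nonneg hπ₀ hK₀ j η)
      (Finset.mem_univ (e i))).trans_eq (sum_condKernel hπ hK₁ hη)
  · exact (e.sum_comp (condKernel s π ν K · η)).trans (sum_condKernel hπ hK₁ hη)
  · exact (e.sum_comp fun j => condKernel s π ν K j η • T j).trans (sum_condKernel_smul hπ hKT hη)
  · rw [hd, hZ, Finset.sum_filter, Finset.sum_filter, Finset.sum_div, ← e.sum_comp]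
    refine Finset.sum_congr rfl fun i _ => ?_
    by_cases h : T (e i) = v
    · simp only [Function.comp_apply, h, if_true, hmix]
    · simp only [Function.comp_apply, h, if_false, zero_div]

theorem isSurveyOf_of_reweighted_decomposition [AddCommGroup E] [Module ℝ E] (φ : E →ₗ[ℝ] ℝ)
    {p : X → ℝ} (hp : ∀ x ∈ s, 0 < p x) {y : X → E} (hy : ∀ x ∈ s, 0 < φ (y x))
    {z : J → E} (hz : ∀ j, 0 < φ (z j)) {w : X → J → ℝ} (hw : ∀ x ∈ s, ∀ j, 0 ≤ w x j)
    (hyz : ∀ x ∈ s, y x = ∑ j, w x j • z j) {q d : E → ℝ}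
    (hq : ∀ η, q η = (∑ x ∈ s, p x * φ (y x) * if (φ (y x))⁻¹ • y x = η then 1 else 0) /
      ∑ x ∈ s, p x * φ (y x))
    (hd : ∀ v, d v = (∑ j, (∑ x ∈ s, p x * w x j) * φ (z j) *
      if (φ (z j))⁻¹ • z j = v then 1 else 0) / ∑ j, (∑ x ∈ s, p x * w x j) * φ (z j)) :
    IsSurveyOf (fun j => (φ (z j))⁻¹ • z j) (s.image fun x => (φ (y x))⁻¹ • y x) q d := by
  have hmass : ∀ j, ∑ x ∈ s, p x * φ (y x) * (w x j * φ (z j) / φ (y x)) =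
      (∑ x ∈ s, p x * w x j) * φ (z j) := fun j => by
    rw [Finset.sum_mul]
    refine Finset.sum_congr rfl fun x hx => ?_
    field_simp [(hy x hx).ne']
  refine isSurveyOf_of_kernel (π := fun x => p x * φ (y x)) (K := fun x j => w x j * φ (z j) / φ (y x))
    _ (fun x hx => mul_pos (hp x hx) (hy x hx))
    (fun x hx j => div_nonneg (mul_nonneg (hw x hx j) (hz j).le) (hy x hx).le)
    (fun x hx => ?_) (fun x hx => ?_)
    (fun η => by simp only [hq, pushMass, Finset.sum_filter, mul_boole])
    (fun v => by simp only [hd, hmass, Finset.sum_filter, mul_boole])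
  · rw [hyz x hx]
    exact φ.sum_mul_map_div_map_sum _ _ (by rw [← hyz x hx]; exact (hy x hx).ne')
  · rw [hyz x hx]
    exact φ.sum_mul_map_div_map_sum_smul_inv_smul _ _ fun j => (hz j).ne'

end Survey

theorem survey_commutes_pushforward_general {r m : ℕ} [DecidableEq (Fin m → ℝ)]
    (V : Fin r → Type*) [∀ i, AddCommGroup (V i)] [∀ i, Module ℝ (V i)]
    (f : (∀ i, V i) → (Fin m → ℝ))
    (hf : ∀ (i : Fin r) (x : ∀ i, V i) (u v : V i) (a b : ℝ),
      0 ≤ a → 0 ≤ b → a + b = 1 →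
      f (Function.update x i (a • u + b • v)) =
        a • f (Function.update x i u) + b • f (Function.update x i v))
    (N : (Fin m → ℝ) → ℝ) (hN : ∀ w, N w = ∑ a, w a)
    (n : Fin r → ℕ) (S : ∀ i, Fin (n i) → V i) (α : ∀ i, Fin (n i) → V i → ℝ)
    (hα01 : ∀ i, ∀ η ∈ convexHull ℝ (Set.range (S i)),
      ∀ j, α i j η ∈ Set.Icc (0:ℝ) 1)
    (hαsum : ∀ i, ∀ η ∈ convexHull ℝ (Set.range (S i)), ∑ j, α i j η = 1)
    (hαdec : ∀ i, ∀ η ∈ convexHull ℝ (Set.range (S i)),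
      ∑ j, α i j η • S i j = η)
    (hpos : ∀ x : ∀ i, V i,
      (∀ i, x i ∈ convexHull ℝ (Set.range (S i))) → 0 < N (f x))
    (p : ∀ i, V i →₀ ℝ) (hp0 : ∀ i η, 0 ≤ p i η)
    (hpsupp : ∀ i, ((p i).support : Set (V i)) ⊆ convexHull ℝ (Set.range (S i)))
    (c : ∀ i, Fin (n i) → ℝ)
    (hc : ∀ i j, c i j = ∑ η ∈ (p i).support, p i η * α i j η)
    (Zp : ℝ) (hZp : Zp = ∑ x ∈ Fintype.piFinset (fun i => (p i).support),
      (∏ i, p i (x i)) * N (f x))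
    (Zc : ℝ) (hZc : Zc = ∑ j : ∀ i, Fin (n i),
      (∏ i, c i (j i)) * N (f (fun i => S i (j i))))
    (q : (Fin m → ℝ) → ℝ)
    (hq : ∀ η, q η = (∑ x ∈ Fintype.piFinset (fun i => (p i).support),
      (∏ i, p i (x i)) * N (f x) * (if (N (f x))⁻¹ • f x = η then 1 else 0)) / Zp)
    (d : (Fin m → ℝ) → ℝ)
    (hd : ∀ η, d η = (∑ j : ∀ i, Fin (n i),
      (∏ i, c i (j i)) * N (f (fun i => S i (j i))) *
      (if (N (f (fun i => S i (j i))))⁻¹ • f (fun i => S i (j i)) = η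
        then 1 else 0)) / Zc)
    (Qsupp : Finset (Fin m → ℝ))
    (hQsupp : Qsupp = (Fintype.piFinset (fun i => (p i).support)).image
      fun x => (N (f x))⁻¹ • f x) :
    ∃ (k : ℕ) (T : Fin k → (Fin m → ℝ)) (γ : Fin k → (Fin m → ℝ) → ℝ),
      (∀ i, ∃ j : ∀ i, Fin (n i),
        T i = (N (f (fun i => S i (j i))))⁻¹ • f (fun i => S i (j i))) ∧
      (∀ η ∈ (Qsupp : Set (Fin m → ℝ)),
        (∀ i, γ i η ∈ Set.Icc (0:ℝ) 1) ∧
        (∑ i, γ i η = 1) ∧ (∑ i, γ i η • T i = η)) ∧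
      (∀ v, d v = ∑ i ∈ Finset.univ.filter (fun i => T i = v),
        ∑ η ∈ Qsupp, q η * γ i η) := by
  set X := Fintype.piFinset fun i => (p i).support with hX
  have hhull : ∀ x ∈ X, ∀ i, x i ∈ convexHull ℝ (Set.range (S i)) :=
    fun x hx i => hpsupp i (Fintype.mem_piFinset.mp hx i)
  have hpX : ∀ x ∈ X, 0 < ∏ i, p i (x i) := fun x hx => Finset.prod_pos fun i _ =>
    (hp0 i _).lt_of_ne' (Finsupp.mem_support_iff.mp (Fintype.mem_piFinset.mp hx i))
  have hαX : ∀ x ∈ X, ∀ j : ∀ i, Fin (n i), 0 ≤ ∏ i, α i (j i) (x i) := fun x hx j =>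
    Finset.prod_nonneg fun i _ => (hα01 i _ (hhull x hx i) (j i)).1
  have hexpand : ∀ x ∈ X,
      f x = ∑ j : ∀ i, Fin (n i), (∏ i, α i (j i) (x i)) • f fun i => S i (j i) := fun x hx =>
    (congrArg f (funext fun i => (hαdec i _ (hhull x hx i)).symm)).trans
      (IsMultiaffine.map_sum_pi hf (fun i k => (hα01 i _ (hhull x hx i) k).1)
        (fun i => hαsum i _ (hhull x hx i)) S)
  have hcprod : ∀ j : ∀ i, Fin (n i),
      ∏ i, c i (j i) = ∑ x ∈ X, (∏ i, p i (x i)) * ∏ i, α i (j i) (x i) := fun j => by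
    simp only [hc, Finset.prod_univ_sum, Finset.prod_mul_distrib, hX]
  obtain ⟨φ, rfl⟩ : ∃ φ : (Fin m → ℝ) →ₗ[ℝ] ℝ, ⇑φ = N :=
    ⟨∑ a, LinearMap.proj a, funext fun w => by simp [hN]⟩
  subst hQsupp
  exact Survey.isSurveyOf_of_reweighted_decomposition (q := q) (d := d) φ hpX (fun x hx => hpos x (hhull x hx))
    (fun j => hpos _ fun i => subset_convexHull ℝ _ ⟨j i, rfl⟩) hαX hexpand
    (fun η => by rw [hq, hZp]) (fun v => by simp only [hd, hZc, hcprod])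

/-- Surveying commutes with the reweighted push-forward (general `r`): if
`C₁,…,C_r` are (independent) surveys of independent `P₁,…,P_r`, `f` is
multi-affine with positive coordinate sums, `Q` is the distribution of the
normalization of `f(P₁,…,P_r)` reweighted by `‖f(P₁,…,P_r)‖`, and `D` is the
analogous distribution built from the surveys, then `D` is a survey of `Q`. -/
theorem survey_commutes_pushforward {r m : ℕ} [DecidableEq (Fin m → ℝ)]
    (V : Fin r → Type*) [∀ i, AddCommGroup (V i)] [∀ i, Module ℝ (V i)]
    [∀ i, DecidableEq (V i)]
    (f : (∀ i, V i) → (Fin m → ℝ))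
    (hf : ∀ (i : Fin r) (x : ∀ i, V i) (u v : V i) (a b : ℝ),
      0 ≤ a → 0 ≤ b → a + b = 1 →
      f (Function.update x i (a • u + b • v)) =
        a • f (Function.update x i u) + b • f (Function.update x i v))
    (N : (Fin m → ℝ) → ℝ) (hN : ∀ w, N w = ∑ a, w a)
    (n : Fin r → ℕ) (S : ∀ i, Fin (n i) → V i) (α : ∀ i, Fin (n i) → V i → ℝ)
    (hα01 : ∀ i, ∀ η ∈ convexHull ℝ (Set.range (S i)),
      ∀ j, α i j η ∈ Set.Icc (0:ℝ) 1)
    (hαsum : ∀ i, ∀ η ∈ convexHull ℝ (Set.range (S i)), ∑ j, α i j η = 1)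
    (hαdec : ∀ i, ∀ η ∈ convexHull ℝ (Set.range (S i)),
      ∑ j, α i j η • S i j = η)
    (hpos : ∀ x : ∀ i, V i,
      (∀ i, x i ∈ convexHull ℝ (Set.range (S i))) → 0 < N (f x))
    (p : ∀ i, V i →₀ ℝ) (hp0 : ∀ i η, 0 ≤ p i η)
    (hp1 : ∀ i, ∑ η ∈ (p i).support, p i η = 1)
    (hpsupp : ∀ i, ((p i).support : Set (V i)) ⊆ convexHull ℝ (Set.range (S i)))
    (c : ∀ i, Fin (n i) → ℝ)
    (hc : ∀ i j, c i j = ∑ η ∈ (p i).support, p i η * α i j η)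
    (Zp : ℝ) (hZp : Zp = ∑ x ∈ Fintype.piFinset (fun i => (p i).support),
      (∏ i, p i (x i)) * N (f x))
    (Zc : ℝ) (hZc : Zc = ∑ j : ∀ i, Fin (n i),
      (∏ i, c i (j i)) * N (f (fun i => S i (j i))))
    (q : (Fin m → ℝ) → ℝ)
    (hq : ∀ η, q η = (∑ x ∈ Fintype.piFinset (fun i => (p i).support),
      (∏ i, p i (x i)) * N (f x) * (if (N (f x))⁻¹ • f x = η then 1 else 0)) / Zp)
    (d : (Fin m → ℝ) → ℝ)
    (hd : ∀ η, d η = (∑ j : ∀ i, Fin (n i),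
      (∏ i, c i (j i)) * N (f (fun i => S i (j i))) *
      (if (N (f (fun i => S i (j i))))⁻¹ • f (fun i => S i (j i)) = η
        then 1 else 0)) / Zc)
    (Qsupp : Finset (Fin m → ℝ))
    (hQsupp : Qsupp = (Fintype.piFinset (fun i => (p i).support)).image
      fun x => (N (f x))⁻¹ • f x) :
    ∃ (k : ℕ) (T : Fin k → (Fin m → ℝ)) (γ : Fin k → (Fin m → ℝ) → ℝ),
      (∀ i, ∃ j : ∀ i, Fin (n i),
        T i = (N (f (fun i => S i (j i))))⁻¹ • f (fun i => S i (j i))) ∧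
      (∀ η ∈ (Qsupp : Set (Fin m → ℝ)),
        (∀ i, γ i η ∈ Set.Icc (0:ℝ) 1) ∧
        (∑ i, γ i η = 1) ∧ (∑ i, γ i η • T i = η)) ∧
      (∀ v, d v = ∑ i ∈ Finset.univ.filter (fun i => T i = v),
        ∑ η ∈ Qsupp, q η * γ i η) :=
  survey_commutes_pushforward_general V f hf N hN n S α hα01 hαsum hαdec hpos p hp0 hpsupp c hc Zp
    hZp Zc hZc q hq d hd Qsupp hQsupp
end

section
/- Sly's identity: Let σ be a configuration of a finite tree generated by the symmetric q-state Potts broadcast process with uniform root, and L(n) the configuration at level n. Define X⁺(n) = P(σ_ρ = a | L) where L is drawn from the distribution of L(n) conditioned on σ_ρ = a, and Y⁺(n) = X⁺(n) − 1/q, x_n = E[Y⁺(n)], z_n = E[(Y⁺(n))²]. Then x_n = E[∑_{a=1}^q (P(σ_ρ = a | L(n)) − 1/q)²] where L(n) is drawn unconditionally, and consequently x_n ≥ z_n ≥ 0. -/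
/-!
Let `J b ℓ` be the joint law of root value and boundary and `M ℓ = ∑ b, J b ℓ` the boundary law.
The law of the boundary given root `b` is `q J b ℓ`, so by symmetry `x_n` equals its average
over the root value, `∑ ℓ ∑ b J b ℓ (p_b - 1/q)` with posterior `p_b = J b ℓ / M ℓ`. Since the
posterior sums to one, `∑ b p_b (p_b - 1/q) = ∑ b (p_b - 1/q)²`, which is the identity.
Averaging `z_n` the same way and bounding `J b ℓ ≤ M ℓ` gives `z_n ≤ x_n`.
-/

open Finset

theorem sum_sum_filter_and_eq {Ω ι κ : Type*} [Fintype Ω] [Fintype ι] [DecidableEq ι]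
    [DecidableEq κ]
    (P : Ω → ℝ) (f : Ω → ι) (g : Ω → κ) (ℓ : κ) :
    ∑ a, ∑ ω ∈ univ.filter (fun ω => f ω = a ∧ g ω = ℓ), P ω
      = ∑ ω ∈ univ.filter (fun ω => g ω = ℓ), P ω := by
  rw [← sum_fiberwise (univ.filter fun ω => g ω = ℓ) f P]
  refine sum_congr rfl fun a _ => ?_
  rw [filter_filter]
  simp only [and_comm]

section ConditionalLaw

variable {ι κ : Type*} [Fintype ι] [Fintype κ]

/-- Since `w i / 0 = 0` in Lean, both sides vanish at `s = 0`. -/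
theorem sum_mul_div_sub_eq_mul_sum_sq {w : ι → ℝ} {s c : ℝ} (hs : ∑ i, w i = s)
    (hc : Fintype.card ι * c = 1) :
    ∑ i, w i * (w i / s - c) = s * ∑ i, (w i / s - c) ^ 2 := by
  rcases eq_or_ne s 0 with rfl | hs0
  · simp [← sum_mul, hs]
  have hcentered : ∑ i, (w i / s - c) = 0 := by
    rw [sum_sub_distrib, ← sum_div, hs, div_self hs0, sum_const, card_univ, nsmul_eq_mul, hc,
      sub_self]
  calc ∑ i, w i * (w i / s - c)
      = ∑ i, s * (w i / s - c) ^ 2 + s * c * ∑ i, (w i / s - c) := by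
        rw [mul_sum, ← sum_add_distrib]
        refine sum_congr rfl fun i _ => ?_
        field_simp
        ring
    _ = s * ∑ i, (w i / s - c) ^ 2 := by rw [hcentered, mul_zero, add_zero, mul_sum]

theorem sum_sum_mul_div_sub_eq {J : ι → κ → ℝ} {M : κ → ℝ} (hM : ∀ ℓ, ∑ b, J b ℓ = M ℓ)
    {c : ℝ} (hc : Fintype.card ι * c = 1) :
    ∑ b, ∑ ℓ, J b ℓ * (J b ℓ / M ℓ - c) = ∑ ℓ, M ℓ * ∑ b, (J b ℓ / M ℓ - c) ^ 2 := by
  rw [sum_comm]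
  exact sum_congr rfl fun ℓ _ => sum_mul_div_sub_eq_mul_sum_sq (hM ℓ) hc

theorem sum_sum_mul_sq_le {J : ι → κ → ℝ} {M : κ → ℝ} (hJ : ∀ b ℓ, 0 ≤ J b ℓ)
    (hM : ∀ ℓ, ∑ b, J b ℓ = M ℓ) (f : ι → κ → ℝ) :
    ∑ b, ∑ ℓ, J b ℓ * f b ℓ ^ 2 ≤ ∑ ℓ, M ℓ * ∑ b, f b ℓ ^ 2 := by
  rw [sum_comm]
  refine sum_le_sum fun ℓ _ => ?_
  rw [mul_sum]
  refine sum_le_sum fun b _ => mul_le_mul_of_nonneg_right ?_ (sq_nonneg _)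
  rw [← hM ℓ]
  exact single_le_sum (fun b _ => hJ b ℓ) (mem_univ b)

end ConditionalLaw

theorem sly_identity_general {Ω 𝓛 : Type*} [Fintype Ω] [Fintype 𝓛] [DecidableEq 𝓛]
    (q : ℕ)
    (P : Ω → ℝ) (hP : ∀ ω, 0 ≤ P ω)
    (root : Ω → Fin q) (Lv : Ω → 𝓛)
    (PL : 𝓛 → ℝ)
    (hPL : ∀ ℓ, PL ℓ = ∑ ω ∈ Finset.univ.filter (fun ω => Lv ω = ℓ), P ω)
    -- joint probability of root value `a` and boundary `ℓ`
    (PJ : Fin q → 𝓛 → ℝ)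
    (hPJ : ∀ a ℓ, PJ a ℓ =
      ∑ ω ∈ Finset.univ.filter (fun ω => root ω = a ∧ Lv ω = ℓ), P ω)
    -- conditional probability of root value `a` given boundary `ℓ`
    (PaL : Fin q → 𝓛 → ℝ) (hPaL : ∀ a ℓ, PaL a ℓ = PJ a ℓ / PL ℓ)
    -- distribution of the boundary conditioned on the root being `a`
    (PLa : Fin q → 𝓛 → ℝ) (hPLa : ∀ a ℓ, PLa a ℓ = PJ a ℓ / (1 / q))
    (xn zn : Fin q → ℝ)
    (hxn : ∀ a, xn a = ∑ ℓ, PLa a ℓ * (PaL a ℓ - 1 / q))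
    (hzn : ∀ a, zn a = ∑ ℓ, PLa a ℓ * (PaL a ℓ - 1 / q) ^ 2)
    -- by the symmetry of the channel these quantities do not depend on `a`
    (hsymx : ∀ a b, xn a = xn b) (hsymz : ∀ a b, zn a = zn b) :
    ∀ a : Fin q,
      xn a = (∑ ℓ, PL ℓ * ∑ b, (PaL b ℓ - 1 / q) ^ 2) ∧
      zn a ≤ xn a ∧ 0 ≤ zn a := by
  intro a
  have hq : (0 : ℝ) < q := Nat.cast_pos.2 a.pos
  have hc : Fintype.card (Fin q) * (1 / (q : ℝ)) = 1 := by simp [hq.ne']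
  have hmarg : ∀ ℓ, ∑ b, PJ b ℓ = PL ℓ := fun ℓ => by
    simp only [hPJ, hPL, sum_sum_filter_and_eq]
  have hPJ0 : ∀ b ℓ, 0 ≤ PJ b ℓ := fun b ℓ => by
    rw [hPJ]
    exact sum_nonneg fun ω _ => hP ω
  have hPLa_eq_mul : ∀ b ℓ, PLa b ℓ = q * PJ b ℓ := fun b ℓ => by
    rw [hPLa, div_div_eq_mul_div, div_one, mul_comm]
  have average : ∀ f : Fin q → ℝ, (∀ b c, f b = f c) → ∑ b, f b = q * f a := fun f hf => by
    simp [sum_eq_card_nsmul fun b _ => hf b a]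
  have hx : xn a = ∑ ℓ, PL ℓ * ∑ b, (PaL b ℓ - 1 / q) ^ 2 := by
    refine mul_left_cancel₀ hq.ne' ?_
    rw [← average xn hsymx]
    simp only [hxn, hPLa_eq_mul, hPaL, mul_assoc, ← mul_sum]
    rw [sum_sum_mul_div_sub_eq hmarg hc]
  refine ⟨hx, le_of_mul_le_mul_left ?_ hq, ?_⟩
  · rw [← average zn hsymz, hx]
    simp only [hzn, hPLa_eq_mul, hPaL, mul_assoc, ← mul_sum]
    exact mul_le_mul_of_nonneg_left (sum_sum_mul_sq_le hPJ0 hmarg _) hq.le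
  · rw [hzn]
    exact sum_nonneg fun ℓ _ =>
      mul_nonneg (hPLa_eq_mul a ℓ ▸ mul_nonneg hq.le (hPJ0 a ℓ)) (sq_nonneg _)

/-- Sly's identity: with a uniform root in the `q`-state broadcast process and
`X⁺(n) = P(σ_ρ = a | L)` for `L` drawn conditioned on `σ_ρ = a`,
`Y⁺ = X⁺ − 1/q`, `x_n = E[Y⁺]`, `z_n = E[(Y⁺)²]` (by symmetry these do not
depend on `a`), one has `x_n = E[∑_a (P(σ_ρ = a | L(n)) − 1/q)²]` with `L(n)`
drawn unconditionally, and consequently `x_n ≥ z_n ≥ 0`. -/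
theorem sly_identity {Ω 𝓛 : Type*} [Fintype Ω] [Fintype 𝓛] [DecidableEq 𝓛]
    (q : ℕ) (hq : 1 ≤ q)
    (P : Ω → ℝ) (hP : ∀ ω, 0 ≤ P ω) (hP1 : ∑ ω, P ω = 1)
    (root : Ω → Fin q) (Lv : Ω → 𝓛)
    -- the root is uniform
    (hroot : ∀ a : Fin q,
      ∑ ω ∈ Finset.univ.filter (fun ω => root ω = a), P ω = 1 / q)
    (PL : 𝓛 → ℝ)
    (hPL : ∀ ℓ, PL ℓ = ∑ ω ∈ Finset.univ.filter (fun ω => Lv ω = ℓ), P ω)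
    (hPLpos : ∀ ℓ, 0 < PL ℓ)
    -- joint probability of root value `a` and boundary `ℓ`
    (PJ : Fin q → 𝓛 → ℝ)
    (hPJ : ∀ a ℓ, PJ a ℓ =
      ∑ ω ∈ Finset.univ.filter (fun ω => root ω = a ∧ Lv ω = ℓ), P ω)
    -- conditional probability of root value `a` given boundary `ℓ`
    (PaL : Fin q → 𝓛 → ℝ) (hPaL : ∀ a ℓ, PaL a ℓ = PJ a ℓ / PL ℓ)
    -- distribution of the boundary conditioned on the root being `a`
    (PLa : Fin q → 𝓛 → ℝ) (hPLa : ∀ a ℓ, PLa a ℓ = PJ a ℓ / (1 / q))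
    (xn zn : Fin q → ℝ)
    (hxn : ∀ a, xn a = ∑ ℓ, PLa a ℓ * (PaL a ℓ - 1 / q))
    (hzn : ∀ a, zn a = ∑ ℓ, PLa a ℓ * (PaL a ℓ - 1 / q) ^ 2)
    -- by the symmetry of the channel these quantities do not depend on `a`
    (hsymx : ∀ a b, xn a = xn b) (hsymz : ∀ a b, zn a = zn b) :
    ∀ a : Fin q,
      xn a = (∑ ℓ, PL ℓ * ∑ b, (PaL b ℓ - 1 / q) ^ 2) ∧
      zn a ≤ xn a ∧ 0 ≤ zn a :=
  sly_identity_general q P hP root Lv PL hPL PJ hPJ PaL hPaL PLa hPLa xn zn hxn hzn hsymx hsymz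
end
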